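/- Let M be a von Neumann algebra and Δ : M → M a 2-local derivation. If Δ is additive, i.e., Δ(x + y) = Δ(x) + Δ(y) for all x, y ∈ M, then Δ is a derivation: Δ is linear and Δ(xy) = Δ(x)y + xΔ(y) for all x, y ∈ M. -/
import Mathlib


open scoped ENNReal NNReal

variable {H : Type*} [NormedAddCommGroup H] [InnerProductSpace ℂ H] [CompleteSpace H]

/-- Scalar multiplication is inherited by a von Neumann algebra from `B(H)`. -/
instance : SMulMemClass (VonNeumannAlgebra H) ℂ (H →L[ℂ] H) where
  smul_mem {M} c _x hx := M.toStarSubalgebra.smul_mem hx c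

/-- A map `D : M → M` is a derivation: it is `ℂ`-linear and satisfies the Leibniz rule. -/
def IsDerivation (M : VonNeumannAlgebra H) (D : M → M) : Prop :=
  (∀ x y : M, D (x + y) = D x + D y) ∧
  (∀ (c : ℂ) (x : M), D (c • x) = c • D x) ∧
  (∀ x y : M, D (x * y) = D x * y + x * D y)

/-- A map `Δ : M → M` (not assumed linear) is a 2-local derivation if for every pair `x, y`
there is a derivation agreeing with `Δ` at `x` and at `y`. -/
def Is2LocalDerivation (M : VonNeumannAlgebra H) (Δ : M → M) : Prop :=
  ∀ x y : M, ∃ D : M → M, IsDerivation M D ∧ Δ x = D x ∧ Δ y = D y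

set_option linter.unusedSectionVars false
set_option maxHeartbeats 1000000

namespace TwoLocalProofAux

variable {H : Type*} [NormedAddCommGroup H] [InnerProductSpace ℂ H] [CompleteSpace H]
variable {M : VonNeumannAlgebra H}

/-- Every von Neumann algebra is semiprime. -/
lemma semiprime (c : M) (h : ∀ v : M, c * v * c = 0) : c = 0 := by
  have h1 := h (star c)
  have h2 : (c : H →L[ℂ] H) * star (c : H →L[ℂ] H) * (c : H →L[ℂ] H) = 0 := by
    have := congrArg (fun (t : M) => (t : H →L[ℂ] H)) h1
    push_cast at this
    exact this
  set A := (c : H →L[ℂ] H) with hA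
  have hs : (A * star A) * (A * star A) = 0 := by
    calc (A * star A) * (A * star A) = (A * star A * A) * star A := by noncomm_ring
    _ = 0 := by rw [h2]; noncomm_ring
  have hsa : star (A * star A) = A * star A := by simp [star_mul, mul_assoc]
  have hz : A * star A = 0 := by
    rw [← norm_eq_zero]
    have h3 := CStarRing.norm_star_mul_self (x := A * star A)
    rw [hsa, hs, norm_zero] at h3
    nlinarith [norm_nonneg (A * star A)]
  have hA0 : A = 0 := by
    rw [← norm_eq_zero]
    have h4 := CStarRing.norm_self_mul_star (x := A)
    rw [hz, norm_zero] at h4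
    nlinarith [norm_nonneg A]
  exact Subtype.ext (by rw [← hA, hA0]; rfl)

/-- `↥M` is 2-torsion free. -/
lemma half_cancel {a : M} (h : a + a = 0) : a = 0 := by
  have h2 : (a : H →L[ℂ] H) + a = 0 := by
    have := congrArg (fun (t : M) => (t : H →L[ℂ] H)) h
    push_cast at this; exact this
  have h3 : (2:ℂ) • (a : H →L[ℂ] H) = 0 := by rw [two_smul]; exact h2
  have h4 := smul_eq_zero.mp h3
  simp at h4
  exact_mod_cast h4

/-- In a semiprime ring, `aMb = 0` implies `bMa = 0`. -/
lemma flip_zero (a b : M) (h : ∀ w : M, a * w * b = 0) : ∀ w : M, b * w * a = 0 := by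
  intro w
  apply semiprime
  intro v
  calc b * w * a * v * (b * w * a) = b * w * (a * v * b) * (w * a) := by noncomm_ring
  _ = 0 := by rw [h v]; noncomm_ring

/-- Brešar–Vukman: if `awb + bwa = 0` for all `w`, then `awb = 0` for all `w`. -/
lemma rel_to_zero (a b : M) (h : ∀ w : M, a * w * b + b * w * a = 0) :
    ∀ w : M, a * w * b = 0 := by
  have h' : ∀ w : M, b * w * a = -(a * w * b) := fun w => eq_neg_of_add_eq_zero_right (h w)
  have step1 : ∀ w v : M, a * w * a * v * b = 0 := by
    intro w v
    have c1 : a * w * a * v * b = -(b * (w * a * v) * a) := by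
      have := h' (w * a * v)
      rw [this]; noncomm_ring
    have c2 : -(b * (w * a * v) * a) = -((b * w * a) * (v * a)) := by noncomm_ring
    have c3 : -((b * w * a) * (v * a)) = (a * w * b) * (v * a) := by
      rw [h' w]; noncomm_ring
    have c4 : (a * w * b) * (v * a) = a * w * (b * v * a) := by noncomm_ring
    have c5 : a * w * (b * v * a) = -(a * w * a * v * b) := by
      rw [h' v]; noncomm_ring
    have : a * w * a * v * b = -(a * w * a * v * b) :=
      ((((c1.trans c2).trans c3).trans c4).trans c5)
    exact half_cancel (add_eq_zero_iff_eq_neg.mpr this)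
  intro w
  apply semiprime
  intro v
  calc a * w * b * v * (a * w * b) = (a * w * (b * v * a)) * (w * b) := by noncomm_ring
  _ = 0 := by
    have c5 : a * w * (b * v * a) = -(a * w * a * v * b) := by rw [h' v]; noncomm_ring
    rw [c5, step1 w v]; noncomm_ring

/-- The derivation defect of `Δ` at the pair `(x, y)`. -/
noncomputable def dd (Δ : M → M) (x y : M) : M := Δ (x * y) - Δ x * y - x * Δ y

section Jordan

variable (Δ : M → M) (hΔ : Is2LocalDerivation M Δ)
    (hadd : ∀ x y : M, Δ (x + y) = Δ x + Δ y)

include hadd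

lemma hzero : Δ 0 = 0 := by
  have h := hadd 0 0
  rw [add_zero] at h
  exact (add_eq_left.mp h.symm)

lemma hsub (p q : M) : Δ (p - q) = Δ p - Δ q := by
  have h := hadd (p - q) q
  rw [sub_add_cancel] at h
  exact eq_sub_of_add_eq h.symm

include hΔ

lemma hsmul (c : ℂ) (x : M) : Δ (c • x) = c • Δ x := by
  obtain ⟨D, hD, h1, h2⟩ := hΔ x (c • x)
  rw [h2, hD.2.1, ← h1]

lemma hsq (x : M) : Δ (x * x) = Δ x * x + x * Δ x := by
  obtain ⟨D, hD, h1, h2⟩ := hΔ x (x * x)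
  rw [h2, hD.2.2, ← h1]

/-- Jordan property: sum form. -/
lemma hS (u v : M) : Δ (u * v + v * u) = Δ u * v + u * Δ v + Δ v * u + v * Δ u := by
  have h := hsq Δ hΔ hadd (u + v)
  rw [show (u + v) * (u + v) = u * u + v * v + (u * v + v * u) from by noncomm_ring,
    hadd (u * u + v * v) (u * v + v * u), hadd (u * u) (v * v),
    hsq Δ hΔ hadd u, hsq Δ hΔ hadd v, hadd u v] at h
  rw [← sub_eq_zero, ← sub_eq_zero_of_eq h]
  noncomm_ring

lemma hsum (x y : M) : Δ (x * y) + Δ (y * x) =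
    Δ x * y + x * Δ y + Δ y * x + y * Δ x :=
  (hadd (x * y) (y * x)).symm.trans (hS Δ hΔ hadd x y)

lemma hanti_lemma (x y : M) : dd Δ x y + dd Δ y x = 0 := by
  simp only [dd]
  rw [← sub_eq_zero_of_eq (hsum Δ hΔ hadd x y)]
  noncomm_ring

lemma hyx (x y : M) : Δ (y * x) = Δ x * y + x * Δ y + Δ y * x + y * Δ x - Δ (x * y) := by
  rw [eq_sub_iff_add_eq, add_comm]
  exact hsum Δ hΔ hadd x y

/-- Jordan triple identity. -/
lemma hJ2 (x y : M) : Δ (x * y * x) = Δ x * (y * x) + x * Δ y * x + x * y * Δ x := by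
  have h := hS Δ hΔ hadd x (x * y + y * x)
  rw [show x * (x * y + y * x) + (x * y + y * x) * x
      = (x * x * y + y * (x * x)) + (x * y * x + x * y * x) from by noncomm_ring,
    hadd (x * x * y + y * (x * x)) (x * y * x + x * y * x),
    hS Δ hΔ hadd (x * x) y, hadd (x * y * x) (x * y * x),
    hsq Δ hΔ hadd x, hS Δ hΔ hadd x y] at h
  have key : (Δ (x * y * x) - (Δ x * (y * x) + x * Δ y * x + x * y * Δ x))
      + (Δ (x * y * x) - (Δ x * (y * x) + x * Δ y * x + x * y * Δ x)) = 0 := by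
    rw [← sub_eq_zero_of_eq h]
    noncomm_ring
  exact sub_eq_zero.mp (half_cancel key)

/-- Linearized Jordan triple identity. -/
lemma hJ3 (x y z : M) : Δ (x * y * z + z * y * x) =
    Δ x * (y * z) + x * Δ y * z + x * y * Δ z
    + Δ z * (y * x) + z * Δ y * x + z * y * Δ x := by
  have h := hJ2 Δ hΔ hadd (x + z) y
  rw [show (x + z) * y * (x + z) = (x * y * x + z * y * z) + (x * y * z + z * y * x)
      from by noncomm_ring,
    hadd (x * y * x + z * y * z) (x * y * z + z * y * x),
    hadd (x * y * x) (z * y * z),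
    hJ2 Δ hΔ hadd x y, hJ2 Δ hΔ hadd z y, hadd x z] at h
  rw [← sub_eq_zero, ← sub_eq_zero_of_eq h]
  noncomm_ring

/-- The key Brešar relation: `δ(x,y) z [x,y] + [x,y] z δ(x,y) = 0`. -/
lemma hKmain (x y z : M) :
    dd Δ x y * z * (x * y - y * x) + (x * y - y * x) * z * dd Δ x y = 0 := by
  have hA := hJ3 Δ hΔ hadd (x * y) z (y * x)
  rw [show x * y * z * (y * x) + y * x * z * (x * y)
      = x * (y * z * y) * x + y * (x * z * x) * y from by noncomm_ring,
    hadd (x * (y * z * y) * x) (y * (x * z * x) * y),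
    hJ2 Δ hΔ hadd x (y * z * y), hJ2 Δ hΔ hadd y (x * z * x),
    hJ2 Δ hΔ hadd y z, hJ2 Δ hΔ hadd x z,
    hyx Δ hΔ hadd x y] at hA
  simp only [dd]
  rw [← sub_eq_zero_of_eq hA]
  noncomm_ring

end Jordan

section Main
variable (Δ : M → M)
    (hadd : ∀ x y : M, Δ (x + y) = Δ x + Δ y)
    (hK : ∀ x y z : M, dd Δ x y * z * (x * y - y * x) + (x * y - y * x) * z * dd Δ x y = 0)
    (hzero : Δ 0 = 0)
    (hsub : ∀ p q : M, Δ (p - q) = Δ p - Δ q)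
    (hanti : ∀ x y : M, dd Δ x y + dd Δ y x = 0)

include hadd

lemma dd_add1 (x u y : M) : dd Δ (x + u) y = dd Δ x y + dd Δ u y := by
  simp only [dd]
  rw [show (x + u) * y = x * y + u * y from by noncomm_ring, hadd (x * y) (u * y), hadd x u]
  noncomm_ring

lemma dd_add2 (x y v : M) : dd Δ x (y + v) = dd Δ x y + dd Δ x v := by
  simp only [dd]
  rw [show x * (y + v) = x * y + x * v from by noncomm_ring, hadd (x * y) (x * v), hadd y v]
  noncomm_ring

include hK

lemma hK2 (x y : M) : ∀ z : M, dd Δ x y * z * (x * y - y * x) = 0 :=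
  rel_to_zero _ _ (hK x y)

lemma hK2' (x y : M) : ∀ z : M, (x * y - y * x) * z * dd Δ x y = 0 :=
  flip_zero _ _ (hK2 Δ hadd hK x y)

lemma hS1 (x u y : M) : ∀ z : M, dd Δ x y * z * (u * y - y * u) = 0 := by
  have hmix : ∀ z : M, dd Δ x y * z * (u * y - y * u) + dd Δ u y * z * (x * y - y * x) = 0 := by
    intro z
    have h0 := hK2 Δ hadd hK (x + u) y z
    rw [dd_add1 Δ hadd x u y] at h0
    have e : (dd Δ x y + dd Δ u y) * z * ((x + u) * y - y * (x + u))
        = dd Δ x y * z * (x * y - y * x) + dd Δ u y * z * (u * y - y * u)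
          + (dd Δ x y * z * (u * y - y * u) + dd Δ u y * z * (x * y - y * x)) := by
      noncomm_ring
    rw [e, hK2 Δ hadd hK x y z, hK2 Δ hadd hK u y z] at h0
    simpa using h0
  intro z
  apply semiprime
  intro w
  have hz' : dd Δ x y * z * (u * y - y * u) = -(dd Δ u y * z * (x * y - y * x)) :=
    eq_neg_of_add_eq_zero_left (hmix z)
  have step : dd Δ x y * z * (u * y - y * u) * w * (dd Δ x y * z * (u * y - y * u))
      = -(dd Δ u y * z * ((x * y - y * x) * w * dd Δ x y * (z * (u * y - y * u)))) := by
    nth_rewrite 1 [hz']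
    noncomm_ring
  rw [step, hK2' Δ hadd hK x y w]
  simp

lemma hS1' (x u y : M) : ∀ z : M, (u * y - y * u) * z * dd Δ x y = 0 :=
  flip_zero _ _ (hS1 Δ hadd hK x u y)

lemma hS2 (x y u v : M) : ∀ z : M, dd Δ x y * z * (u * v - v * u) = 0 := by
  have hmix : ∀ z : M, dd Δ x y * z * (u * v - v * u) + dd Δ x v * z * (u * y - y * u) = 0 := by
    intro z
    have h0 := hS1 Δ hadd hK x u (y + v) z
    rw [dd_add2 Δ hadd x y v] at h0
    have e : (dd Δ x y + dd Δ x v) * z * (u * (y + v) - (y + v) * u)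
        = dd Δ x y * z * (u * y - y * u) + dd Δ x v * z * (u * v - v * u)
          + (dd Δ x y * z * (u * v - v * u) + dd Δ x v * z * (u * y - y * u)) := by
      noncomm_ring
    rw [e, hS1 Δ hadd hK x u y z, hS1 Δ hadd hK x u v z] at h0
    simpa using h0
  intro z
  apply semiprime
  intro w
  have hz' : dd Δ x y * z * (u * v - v * u) = -(dd Δ x v * z * (u * y - y * u)) :=
    eq_neg_of_add_eq_zero_left (hmix z)
  have step : dd Δ x y * z * (u * v - v * u) * w * (dd Δ x y * z * (u * v - v * u))
      = -(dd Δ x v * z * ((u * y - y * u) * w * dd Δ x y * (z * (u * v - v * u)))) := by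
    nth_rewrite 1 [hz']
    noncomm_ring
  rw [step, hS1' Δ hadd hK x u y w]
  simp

lemma hkill (x y u v : M) : dd Δ x y * (u * v - v * u) = 0 := by
  have h := hS2 Δ hadd hK x y u v 1
  rw [mul_one] at h
  exact h

lemma hcent (x y : M) : ∀ v : M, dd Δ x y * v = v * dd Δ x y := by
  intro v
  have hs : ∀ z : M, (dd Δ x y * v - v * dd Δ x y) * z * (dd Δ x y * v - v * dd Δ x y) = 0 := by
    intro z
    have a1 := hS2 Δ hadd hK x y (dd Δ x y) v (v * z)
    have a2 := hS2 Δ hadd hK x y (dd Δ x y) v z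
    calc (dd Δ x y * v - v * dd Δ x y) * z * (dd Δ x y * v - v * dd Δ x y)
        = dd Δ x y * (v * z) * (dd Δ x y * v - v * dd Δ x y)
          - v * (dd Δ x y * z * (dd Δ x y * v - v * dd Δ x y)) := by noncomm_ring
      _ = 0 := by rw [a1, a2]; simp
  have h0 := semiprime _ hs
  rw [sub_eq_zero] at h0
  exact h0

include hzero hsub hanti

lemma dd_zero (x y : M) : dd Δ x y = 0 := by
  have hcomm := hcent Δ hadd hK x y
  have hkil : ∀ u v : M, dd Δ x y * (u * v - v * u) = 0 := fun u v => hkill Δ hadd hK x y u v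
  have htB : dd Δ x y * (x * y - y * x) = 0 := hkil x y
  have hBt : (x * y - y * x) * dd Δ x y = 0 := by rw [← hcomm (x * y - y * x)]; exact htB
  have hstar : Δ (dd Δ x y) * (x * y - y * x) + dd Δ x y * Δ (x * y - y * x)
      + (Δ (x * y - y * x) * dd Δ x y + (x * y - y * x) * Δ (dd Δ x y)) = 0 := by
    have h := hanti (dd Δ x y) (x * y - y * x)
    rw [show dd Δ (dd Δ x y) (x * y - y * x)
        = Δ (dd Δ x y * (x * y - y * x)) - Δ (dd Δ x y) * (x * y - y * x)
          - dd Δ x y * Δ (x * y - y * x) from rfl,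
      show dd Δ (x * y - y * x) (dd Δ x y)
        = Δ ((x * y - y * x) * dd Δ x y) - Δ (x * y - y * x) * dd Δ x y
          - (x * y - y * x) * Δ (dd Δ x y) from rfl] at h
    rw [htB, hBt, hzero] at h
    calc Δ (dd Δ x y) * (x * y - y * x) + dd Δ x y * Δ (x * y - y * x)
        + (Δ (x * y - y * x) * dd Δ x y + (x * y - y * x) * Δ (dd Δ x y))
        = -((0 - Δ (dd Δ x y) * (x * y - y * x) - dd Δ x y * Δ (x * y - y * x))
          + (0 - Δ (x * y - y * x) * dd Δ x y - (x * y - y * x) * Δ (dd Δ x y))) := by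
          noncomm_ring
      _ = -0 := by rw [h]
      _ = 0 := neg_zero
  have hxy : Δ (x * y) = dd Δ x y + Δ x * y + x * Δ y := by
    simp only [dd]; noncomm_ring
  have hyx' : Δ (y * x) = Δ y * x + y * Δ x - dd Δ x y := by
    have h := hanti x y
    simp only [dd] at h
    rw [← sub_eq_zero]
    simp only [dd]
    rw [← h]
    noncomm_ring
  have hB3 : Δ (x * y - y * x)
      = dd Δ x y + dd Δ x y + (Δ x * y - y * Δ x) + (x * Δ y - Δ y * x) := by
    rw [hsub (x * y) (y * x), hxy, hyx']
    noncomm_ring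
  have htdB : dd Δ x y * Δ (x * y - y * x) = dd Δ x y * dd Δ x y + dd Δ x y * dd Δ x y := by
    calc dd Δ x y * Δ (x * y - y * x)
        = dd Δ x y * dd Δ x y + dd Δ x y * dd Δ x y
          + dd Δ x y * (Δ x * y - y * Δ x) + dd Δ x y * (x * Δ y - Δ y * x) := by
          rw [hB3]; noncomm_ring
      _ = dd Δ x y * dd Δ x y + dd Δ x y * dd Δ x y := by
          rw [hkil (Δ x) y, hkil x (Δ y)]; simp
  have hdBt : Δ (x * y - y * x) * dd Δ x y
      = dd Δ x y * dd Δ x y + dd Δ x y * dd Δ x y := by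
    rw [← hcomm (Δ (x * y - y * x))]; exact htdB
  rw [htdB, hdBt] at hstar
  -- multiply by dd Δ x y on the left
  have hm : dd Δ x y * (Δ (dd Δ x y) * (x * y - y * x)
      + (dd Δ x y * dd Δ x y + dd Δ x y * dd Δ x y)
      + (dd Δ x y * dd Δ x y + dd Δ x y * dd Δ x y + (x * y - y * x) * Δ (dd Δ x y))) = 0 := by
    rw [hstar, mul_zero]
  have e : dd Δ x y * (Δ (dd Δ x y) * (x * y - y * x)
      + (dd Δ x y * dd Δ x y + dd Δ x y * dd Δ x y)
      + (dd Δ x y * dd Δ x y + dd Δ x y * dd Δ x y + (x * y - y * x) * Δ (dd Δ x y)))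
      = dd Δ x y * Δ (dd Δ x y) * (x * y - y * x)
        + dd Δ x y * (x * y - y * x) * Δ (dd Δ x y)
        + ((dd Δ x y * (dd Δ x y * dd Δ x y) + dd Δ x y * (dd Δ x y * dd Δ x y))
          + (dd Δ x y * (dd Δ x y * dd Δ x y) + dd Δ x y * (dd Δ x y * dd Δ x y))) := by
    noncomm_ring
  rw [e] at hm
  have e2 : dd Δ x y * Δ (dd Δ x y) * (x * y - y * x) = 0 := by
    rw [hcomm (Δ (dd Δ x y)), mul_assoc, htB, mul_zero]
  have e3 : dd Δ x y * (x * y - y * x) * Δ (dd Δ x y) = 0 := by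
    rw [htB, zero_mul]
  rw [e2, e3] at hm
  have h4 : (dd Δ x y * (dd Δ x y * dd Δ x y) + dd Δ x y * (dd Δ x y * dd Δ x y))
      + (dd Δ x y * (dd Δ x y * dd Δ x y) + dd Δ x y * (dd Δ x y * dd Δ x y)) = 0 := by
    rw [zero_add, zero_add] at hm
    exact hm
  have ht3 : dd Δ x y * (dd Δ x y * dd Δ x y) = 0 := half_cancel (half_cancel h4)
  have hv : ∀ v : M, dd Δ x y * (dd Δ x y * v) = v * (dd Δ x y * dd Δ x y) := by
    intro v
    rw [hcomm v, ← mul_assoc, hcomm v, mul_assoc]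
  have ht2 : dd Δ x y * dd Δ x y = 0 := by
    apply semiprime
    intro v
    calc dd Δ x y * dd Δ x y * v * (dd Δ x y * dd Δ x y)
        = (dd Δ x y * (dd Δ x y * v)) * (dd Δ x y * dd Δ x y) := by noncomm_ring
      _ = (v * (dd Δ x y * dd Δ x y)) * (dd Δ x y * dd Δ x y) := by rw [hv v]
      _ = v * ((dd Δ x y * (dd Δ x y * dd Δ x y)) * dd Δ x y) := by noncomm_ring
      _ = 0 := by rw [ht3]; simp
  apply semiprime
  intro v
  calc dd Δ x y * v * dd Δ x y = v * (dd Δ x y * dd Δ x y) := by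
        rw [hcomm v]; noncomm_ring
    _ = 0 := by rw [ht2]; simp

end Main

end TwoLocalProofAux

/-- An additive 2-local derivation on a von Neumann algebra is a derivation. -/
theorem twoLocalDerivation_isDerivation_of_additive
    (M : VonNeumannAlgebra H) (Δ : M → M) (hΔ : Is2LocalDerivation M Δ)
    (hadd : ∀ x y : M, Δ (x + y) = Δ x + Δ y) :
    IsDerivation M Δ := by
  refine ⟨hadd, TwoLocalProofAux.hsmul Δ hΔ hadd, fun x y => ?_⟩
  have h := TwoLocalProofAux.dd_zero Δ hadd
    (TwoLocalProofAux.hKmain Δ hΔ hadd)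
    (TwoLocalProofAux.hzero Δ hadd)
    (TwoLocalProofAux.hsub Δ hadd)
    (TwoLocalProofAux.hanti_lemma Δ hΔ hadd) x y
  simp only [TwoLocalProofAux.dd] at h
  rw [sub_sub, sub_eq_zero] at h
  exact h
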